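/- arXiv:2201.05569 — 2 statements merged into one kernel-verified Lean document; each statement's English description precedes it below -/
import Mathlib

section
/- Let $\Gamma$ be a $2$-$Y$-homogeneous $(Y,Y')$-distance-biregular graph with $D \ge 3$. If $c'_2 \ge 3$ then $D \le 5$. -/
open SimpleGraph Set

/-- A `(Y,Y')`-distance-biregular graph: a finite connected bipartite graph in which
every vertex is distance-regularized, and vertices in the same color class share the
same intersection numbers (`c`, `b` for class `Y` and `c'`, `b'` for class `Y'`),
while the two color classes have different intersection arrays.
`D` (resp. `D'`) is the common eccentricity of vertices in `Y` (resp. `Y'`). -/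
structure DBRG (V : Type) [Fintype V] where
  G : SimpleGraph V
  conn : G.Connected
  Y : Finset V
  Y' : Finset V
  Yne : Y.Nonempty
  Y'ne : Y'.Nonempty
  cover : ∀ v, v ∈ Y ∨ v ∈ Y'
  disj : ∀ v, ¬(v ∈ Y ∧ v ∈ Y')
  bip : ∀ u v, G.Adj u v → (u ∈ Y ↔ v ∈ Y')
  D : ℕ
  D' : ℕ
  eccY : ∀ x ∈ Y, (∃ y, G.dist x y = D) ∧ ∀ y, G.dist x y ≤ D
  eccY' : ∀ x ∈ Y', (∃ y, G.dist x y = D') ∧ ∀ y, G.dist x y ≤ D'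
  c : ℕ → ℕ
  b : ℕ → ℕ
  c' : ℕ → ℕ
  b' : ℕ → ℕ
  hc : ∀ i, 1 ≤ i → ∀ x ∈ Y, ∀ z, G.dist x z = i →
    {w | G.Adj z w ∧ G.dist x w = i - 1}.ncard = c i
  hb : ∀ i, ∀ x ∈ Y, ∀ z, G.dist x z = i →
    {w | G.Adj z w ∧ G.dist x w = i + 1}.ncard = b i
  hc' : ∀ i, 1 ≤ i → ∀ x ∈ Y', ∀ z, G.dist x z = i →
    {w | G.Adj z w ∧ G.dist x w = i - 1}.ncard = c' i
  hb' : ∀ i, ∀ x ∈ Y', ∀ z, G.dist x z = i →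
    {w | G.Adj z w ∧ G.dist x w = i + 1}.ncard = b' i
  c0 : c 0 = 0
  c'0 : c' 0 = 0
  nonreg : ¬ (∀ i, c i = c' i ∧ b i = b' i)

/-- `Γ` is `2`-`Y`-homogeneous with parameters `γ i`: for all `1 ≤ i ≤ D - 1` and all
`x ∈ Y`, `y ∈ Γ₂(x)`, `z ∈ Γ_{i,i}(x,y)`, the number of common neighbours of `x` and `y`
at distance `i - 1` from `z` equals `γ i` (independently of `x`, `y`, `z`). -/
def DBRG.TwoYHom {V : Type} [Fintype V] (Γ : DBRG V) (γ : ℕ → ℕ) : Prop :=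
  ∀ i, 1 ≤ i → i ≤ Γ.D - 1 → ∀ x ∈ Γ.Y, ∀ y, Γ.G.dist x y = 2 →
    ∀ z, Γ.G.dist x z = i → Γ.G.dist y z = i →
      {w | Γ.G.dist z w = i - 1 ∧ Γ.G.Adj x w ∧ Γ.G.Adj y w}.ncard = γ i

/-!
Suppose `D ≥ 6` and write `k' = b'₀` for the valency of the vertices of `Y'`. Counting the edges
between two suitable sets of common neighbours along a geodesic `x ~ w ~ y ~ z` from `x ∈ Y` gives
`c₂ (c'₂ - 1) = (c₃ - 1) γ₂` and `(k' - 2)(γ₂ - 1) = (c₂ - 1)(c'₂ - 2)`; as `c₂ ≥ 2`, the latter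
forces `γ₂ ≥ 2`. Since `3 + 3 ≤ D`, `c₃ ≤ b₃`, hence `2 c₃ ≤ c₃ + b₃ = k'`, and then
`2 (c₃ - 1)(γ₂ - 1) ≥ (c₃ - 1) γ₂ = c₂ (c'₂ - 1) > (c₂ - 1)(c'₂ - 2) = (k' - 2)(γ₂ - 1)
  ≥ 2 (c₃ - 1)(γ₂ - 1)`.
-/

open Finset

attribute [local instance] Classical.propDecidable

theorem Nat.lt_two_mul_of_mul_sub_eq {c₂ c₂' c₃ k g : ℕ} (hc₂ : 2 ≤ c₂) (hc₂' : 3 ≤ c₂')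
    (h₁ : c₂ * (c₂' - 1) = (c₃ - 1) * g) (h₂ : (k - 2) * (g - 1) = (c₂ - 1) * (c₂' - 2)) :
    k < 2 * c₃ := by
  by_contra! hk
  have hg : 2 ≤ g := by
    by_contra! hg
    rw [Nat.sub_eq_zero_of_le (by omega : g ≤ 1), mul_zero] at h₂
    exact (Nat.mul_pos (by omega) (by omega)).ne h₂
  have hc₃ : 1 ≤ c₃ := by
    by_contra! hc₃
    rw [Nat.sub_eq_zero_of_le (by omega : c₃ ≤ 1), zero_mul] at h₁
    exact (Nat.mul_pos (by omega) (by omega)).ne' h₁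
  zify [(by omega : 1 ≤ c₂), (by omega : 1 ≤ c₂'), (by omega : 2 ≤ c₂'), (by omega : 1 ≤ g),
    hc₃, (by omega : 2 ≤ k)] at h₁ h₂ hk
  nlinarith

namespace SimpleGraph

variable {V : Type*} {G : SimpleGraph V}

theorem Reachable.exists_dist_eq_of_le {u v : V} (huv : G.Reachable u v) {k : ℕ}
    (hk : k ≤ G.dist u v) : ∃ w, G.dist u w = k ∧ G.dist w v = G.dist u v - k := by
  obtain ⟨p, hp⟩ := huv.exists_walk_length_eq_dist
  have h₁ : G.dist u (p.getVert k) ≤ k := by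
    simpa [hp, hk] using dist_le (p.take k)
  have h₂ : G.dist (p.getVert k) v ≤ G.dist u v - k := by
    simpa [hp] using dist_le (p.drop k)
  have h₃ : G.dist u v ≤ G.dist u (p.getVert k) + G.dist (p.getVert k) v :=
    (p.take k).reachable.dist_triangle_left v
  exact ⟨p.getVert k, by omega, by omega⟩

end SimpleGraph

namespace DBRG

variable {V : Type} [Fintype V] (Γ : DBRG V)

theorem mem_Y'_iff_notMem_Y {v : V} : v ∈ Γ.Y' ↔ v ∉ Γ.Y :=
  ⟨fun h h' => Γ.disj v ⟨h', h⟩, (Γ.cover v).resolve_left⟩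

theorem mem_Y_iff_notMem_Y_of_adj {u v : V} (h : Γ.G.Adj u v) : u ∈ Γ.Y ↔ v ∉ Γ.Y :=
  (Γ.bip u v h).trans Γ.mem_Y'_iff_notMem_Y

theorem even_dist_iff (x z : V) : Even (Γ.G.dist x z) ↔ (x ∈ Γ.Y ↔ z ∈ Γ.Y) := by
  let c : Γ.G.Coloring Bool := Coloring.mk (fun v => decide (v ∈ Γ.Y)) fun h => by
    simp [Γ.mem_Y_iff_notMem_Y_of_adj h]
  obtain ⟨p, hp⟩ := Γ.conn.exists_walk_length_eq_dist x z
  rw [← hp, c.even_length_iff_congr p]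
  exact (iff_congr decide_eq_true_iff decide_eq_true_iff)

theorem dist_ne_of_adj (x : V) {u v : V} (h : Γ.G.Adj u v) : Γ.G.dist x u ≠ Γ.G.dist x v := by
  intro huv
  have := (Γ.even_dist_iff x u).symm.trans (huv ▸ Γ.even_dist_iff x v)
  have := Γ.mem_Y_iff_notMem_Y_of_adj h
  tauto

theorem dist_eq_add_one_or_sub_one_of_adj (x : V) {u v : V} (h : Γ.G.Adj u v) :
    Γ.G.dist x v = Γ.G.dist x u + 1 ∨ Γ.G.dist x v = Γ.G.dist x u - 1 := by
  have := Γ.dist_ne_of_adj x h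
  have := h.diff_dist_adj (u := x)
  omega

theorem dist_eq_two_of_adj_of_adj {u v w : V} (hne : u ≠ v) (hu : Γ.G.Adj u w)
    (hv : Γ.G.Adj w v) : Γ.G.dist u v = 2 := by
  have hle : Γ.G.dist u v ≤ Γ.G.dist u w + Γ.G.dist w v := Γ.conn.dist_triangle
  rw [dist_eq_one_iff_adj.mpr hu, dist_eq_one_iff_adj.mpr hv] at hle
  have hpos := Γ.conn.pos_dist_of_ne hne
  have heven : Even (Γ.G.dist u v) := by
    rw [Γ.even_dist_iff]
    have := Γ.mem_Y_iff_notMem_Y_of_adj hu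
    have := Γ.mem_Y_iff_notMem_Y_of_adj hv
    tauto
  obtain ⟨r, hr⟩ := heven
  omega

theorem exists_dist_eq {x : V} (hx : x ∈ Γ.Y) {k : ℕ} (hk : k ≤ Γ.D) :
    ∃ z, Γ.G.dist x z = k := by
  obtain ⟨⟨t, ht⟩, -⟩ := Γ.eccY x hx
  obtain ⟨z, hz, -⟩ := (Γ.conn x t).exists_dist_eq_of_le (ht ▸ hk)
  exact ⟨z, hz⟩

theorem card_filter_dist_sub_one {x z : V} (hx : x ∈ Γ.Y) {i : ℕ} (hi : 1 ≤ i)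
    (hz : Γ.G.dist x z = i) : #{w ∈ Γ.G.neighborFinset z | Γ.G.dist x w = i - 1} = Γ.c i := by
  rw [← Γ.hc i hi x hx z hz, ← Set.ncard_coe_finset]
  congr 1; ext w; simp

theorem card_filter_dist_add_one {x z : V} (hx : x ∈ Γ.Y) {i : ℕ}
    (hz : Γ.G.dist x z = i) : #{w ∈ Γ.G.neighborFinset z | Γ.G.dist x w = i + 1} = Γ.b i := by
  rw [← Γ.hb i x hx z hz, ← Set.ncard_coe_finset]
  congr 1; ext w; simp

theorem card_inter_of_mem_Y {x y : V} (hx : x ∈ Γ.Y) (hy : Γ.G.dist x y = 2) :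
    #(Γ.G.neighborFinset x ∩ Γ.G.neighborFinset y) = Γ.c 2 := by
  rw [← Γ.hc 2 one_le_two x hx y hy, ← Set.ncard_coe_finset]
  congr 1; ext w; simp [and_comm]

theorem card_inter_of_mem_Y' {x y : V} (hx : x ∈ Γ.Y') (hy : Γ.G.dist x y = 2) :
    #(Γ.G.neighborFinset x ∩ Γ.G.neighborFinset y) = Γ.c' 2 := by
  rw [← Γ.hc' 2 one_le_two x hx y hy, ← Set.ncard_coe_finset]
  congr 1; ext w; simp [and_comm]

theorem degree_of_mem_Y' {x : V} (hx : x ∈ Γ.Y') : Γ.G.degree x = Γ.b' 0 := by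
  rw [← Γ.hb' 0 x hx x dist_self, ← card_neighborFinset_eq_degree, ← Set.ncard_coe_finset]
  congr 1; ext w; simp

theorem mem_Y'_of_odd_dist {x z : V} (hx : x ∈ Γ.Y) (hz : Odd (Γ.G.dist x z)) : z ∈ Γ.Y' := by
  rw [Γ.mem_Y'_iff_notMem_Y]
  have := (Γ.even_dist_iff x z).not.mp (Nat.not_even_iff_odd.mpr hz)
  tauto

theorem c_add_b_of_odd {i : ℕ} (hi : Odd i) (hiD : i ≤ Γ.D) : Γ.c i + Γ.b i = Γ.b' 0 := by
  obtain ⟨x, hx⟩ := Γ.Yne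
  obtain ⟨z, hz⟩ := Γ.exists_dist_eq hx hiD
  rw [← Γ.card_filter_dist_sub_one hx hi.pos hz, ← Γ.card_filter_dist_add_one hx hz,
    ← Γ.degree_of_mem_Y' (Γ.mem_Y'_of_odd_dist hx (hz ▸ hi)), ← card_neighborFinset_eq_degree,
    ← card_filter_add_card_filter_not (s := Γ.G.neighborFinset z)
      (fun w => Γ.G.dist x w = i - 1)]
  congr 2
  refine filter_congr fun w hw => ?_
  have := Γ.dist_eq_add_one_or_sub_one_of_adj x ((mem_neighborFinset _ _ _).mp hw)
  omega

theorem c_le_b {i : ℕ} (hi : 2 * i ≤ Γ.D) : Γ.c i ≤ Γ.b i := by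
  rcases Nat.eq_zero_or_pos i with rfl | hi₀
  · simp [Γ.c0]
  obtain ⟨x, hx⟩ := Γ.Yne
  obtain ⟨y, hxy⟩ := Γ.exists_dist_eq hx hi
  obtain ⟨z, hxz, hzy⟩ := (Γ.conn x y).exists_dist_eq_of_le (k := i) (by omega)
  have hy : y ∈ Γ.Y := (Γ.even_dist_iff x y).mp ⟨i, by omega⟩ |>.mp hx
  rw [← Γ.card_filter_dist_sub_one hx hi₀ hxz,
    ← Γ.card_filter_dist_add_one hy (by rw [dist_comm, hzy, hxy]; omega)]
  refine card_le_card fun w hw => ?_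
  simp only [mem_filter, mem_neighborFinset] at hw ⊢
  refine ⟨hw.1, ?_⟩
  have h₁ : Γ.G.dist x y ≤ Γ.G.dist x w + Γ.G.dist w y := Γ.conn.dist_triangle
  have h₂ : Γ.G.dist w y ≤ Γ.G.dist w z + Γ.G.dist z y := Γ.conn.dist_triangle
  have h₃ : Γ.G.dist w z = 1 := dist_eq_one_iff_adj.mpr hw.1.symm
  rw [dist_comm]
  omega

theorem exists_path_three (hD : 3 ≤ Γ.D) : ∃ x ∈ Γ.Y, ∃ w y z : V,
    Γ.G.Adj x w ∧ Γ.G.Adj w y ∧ Γ.G.Adj y z ∧ Γ.G.dist x y = 2 ∧ Γ.G.dist x z = 3 := by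
  obtain ⟨x, hx⟩ := Γ.Yne
  obtain ⟨z, hxz⟩ := Γ.exists_dist_eq hx hD
  obtain ⟨y, hxy, hyz⟩ := (Γ.conn x z).exists_dist_eq_of_le (k := 2) (by omega)
  obtain ⟨w, hxw, hwy⟩ := (Γ.conn x y).exists_dist_eq_of_le (k := 1) (by omega)
  rw [hxz] at hyz
  rw [hxy] at hwy
  exact ⟨x, hx, w, y, z, dist_eq_one_iff_adj.mp hxw, dist_eq_one_iff_adj.mp hwy,
    dist_eq_one_iff_adj.mp hyz, hxy, hxz⟩

theorem two_le_c_two (hD : 3 ≤ Γ.D) (hc' : 2 ≤ Γ.c' 2) : 2 ≤ Γ.c 2 := by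
  obtain ⟨x, hx, w, y, z, hxw, hwy, hyz, -, hxz⟩ := Γ.exists_path_three hD
  have hwz : w ≠ z := by
    rintro rfl
    rw [dist_eq_one_iff_adj.mpr hxw] at hxz
    omega
  have hw : w ∈ Γ.Y' := (Γ.bip x w hxw).mp hx
  rw [← Γ.card_inter_of_mem_Y' hw (Γ.dist_eq_two_of_adj_of_adj hwz hwy hyz)] at hc'
  obtain ⟨a, ha, b, hb, hab⟩ := one_lt_card.mp hc'
  simp only [Finset.mem_inter, mem_neighborFinset] at ha hb
  have hwa : Γ.G.Adj a w := ha.1.symm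
  have haY : a ∈ Γ.Y := by
    have := Γ.mem_Y_iff_notMem_Y_of_adj hwa
    rw [Γ.mem_Y'_iff_notMem_Y] at hw
    tauto
  rw [← Γ.card_inter_of_mem_Y haY (Γ.dist_eq_two_of_adj_of_adj hab hwa hb.1), ← card_pair hwz]
  refine card_le_card fun v hv => ?_
  simp only [Finset.mem_insert, Finset.mem_singleton] at hv
  rcases hv with rfl | rfl <;> simp [ha.1.symm, ha.2.symm, hb.1.symm, hb.2.symm]

variable {Γ} {γ : ℕ → ℕ}

theorem TwoYHom.card_inter_inter (hhom : Γ.TwoYHom γ) (hD : 3 ≤ Γ.D)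
    {x y z : V} (hx : x ∈ Γ.Y) (hxy : Γ.G.dist x y = 2) (hxz : Γ.G.dist x z = 2)
    (hyz : Γ.G.dist y z = 2) :
    #(Γ.G.neighborFinset x ∩ Γ.G.neighborFinset y ∩ Γ.G.neighborFinset z) = γ 2 := by
  rw [← hhom 2 one_le_two (by omega) x hx y hxy z hxz hyz, ← Set.ncard_coe_finset]
  congr 1; ext w; simp [adj_comm _ z]; tauto

theorem TwoYHom.c_two_mul_eq (hhom : Γ.TwoYHom γ) (hD : 3 ≤ Γ.D) :
    Γ.c 2 * (Γ.c' 2 - 1) = (Γ.c 3 - 1) * γ 2 := by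
  obtain ⟨x, hx, -, y, z, -, -, hyz, hxy, hxz⟩ := Γ.exists_path_three hD
  set s := Γ.G.neighborFinset x ∩ Γ.G.neighborFinset y
  set t := ({v ∈ Γ.G.neighborFinset z | Γ.G.dist x v = 2} : Finset V).erase y
  have hs : #s = Γ.c 2 := Γ.card_inter_of_mem_Y hx hxy
  have ht : #t = Γ.c 3 - 1 := by
    rw [card_erase_of_mem (by simp [hyz.symm, hxy]),
      Γ.card_filter_dist_sub_one hx (by norm_num) hxz]
  rw [← hs, ← ht]
  refine card_mul_eq_card_mul Γ.G.Adj (fun a ha => ?_) (fun v hv => ?_)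
  · simp only [s, Finset.mem_inter, mem_neighborFinset] at ha
    have haz : Γ.G.dist a z = 2 := by
      refine Γ.dist_eq_two_of_adj_of_adj ?_ ha.2.symm hyz
      rintro rfl
      rw [dist_eq_one_iff_adj.mpr ha.1] at hxz
      omega
    have hab : t.bipartiteAbove Γ.G.Adj a =
        (Γ.G.neighborFinset a ∩ Γ.G.neighborFinset z).erase y := by
      ext v
      simp only [t, mem_bipartiteAbove, mem_erase, mem_filter, Finset.mem_inter,
        mem_neighborFinset]
      constructor
      · rintro ⟨⟨hvy, hzv, -⟩, hav⟩
        exact ⟨hvy, hav, hzv⟩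
      · rintro ⟨hvy, hav, hzv⟩
        have h₁ := Γ.conn.dist_triangle (u := x) (v := a) (w := v)
        have h₂ := Γ.dist_eq_add_one_or_sub_one_of_adj x hzv
        rw [dist_eq_one_iff_adj.mpr ha.1, dist_eq_one_iff_adj.mpr hav] at h₁
        exact ⟨⟨hvy, hzv, by omega⟩, hav⟩
    rw [hab, card_erase_of_mem (by simp [ha.2.symm, hyz.symm]),
      Γ.card_inter_of_mem_Y' ((Γ.bip x a ha.1).mp hx) haz]
  · simp only [t, mem_erase, mem_filter, mem_neighborFinset] at hv
    have hbe : s.bipartiteBelow Γ.G.Adj v =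
        Γ.G.neighborFinset x ∩ Γ.G.neighborFinset y ∩ Γ.G.neighborFinset v := by
      ext a
      simp [s, mem_bipartiteBelow, adj_comm _ v, and_assoc]
    rw [hbe, hhom.card_inter_inter hD hx hxy hv.2.2
      (Γ.dist_eq_two_of_adj_of_adj (Ne.symm hv.1) hyz hv.2.1)]

theorem TwoYHom.b'_zero_sub_two_mul_eq (hhom : Γ.TwoYHom γ) (hD : 3 ≤ Γ.D) :
    (Γ.b' 0 - 2) * (γ 2 - 1) = (Γ.c 2 - 1) * (Γ.c' 2 - 2) := by
  obtain ⟨x, hx, w, y, -, hxw, hwy, -, hxy, -⟩ := Γ.exists_path_three hD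
  have hw : w ∈ Γ.Y' := (Γ.bip x w hxw).mp hx
  have hxy' : x ≠ y := by
    rintro rfl
    simp at hxy
  set s := ((Γ.G.neighborFinset w).erase x).erase y
  set t := (Γ.G.neighborFinset x ∩ Γ.G.neighborFinset y).erase w
  have hs : #s = Γ.b' 0 - 2 := by
    rw [card_erase_of_mem (by simp [hxy'.symm, hwy]), card_erase_of_mem (by simp [hxw.symm]),
      card_neighborFinset_eq_degree, Γ.degree_of_mem_Y' hw, Nat.sub_sub]
  have ht : #t = Γ.c 2 - 1 := by
    rw [card_erase_of_mem (by simp [hxw, hwy.symm]), Γ.card_inter_of_mem_Y hx hxy]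
  rw [← hs, ← ht]
  refine card_mul_eq_card_mul Γ.G.Adj (fun a ha => ?_) (fun v hv => ?_)
  · simp only [s, mem_erase, mem_neighborFinset] at ha
    have hab : t.bipartiteAbove Γ.G.Adj a =
        (Γ.G.neighborFinset x ∩ Γ.G.neighborFinset y ∩ Γ.G.neighborFinset a).erase w := by
      ext v
      simp [t, mem_bipartiteAbove]
      tauto
    rw [hab, card_erase_of_mem (by simp [hxw, hwy.symm, ha.2.2.symm]),
      hhom.card_inter_inter hD hx hxy
        (Γ.dist_eq_two_of_adj_of_adj (Ne.symm ha.2.1) hxw ha.2.2)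
        (Γ.dist_eq_two_of_adj_of_adj (Ne.symm ha.1) hwy.symm ha.2.2)]
  · simp only [t, mem_erase, Finset.mem_inter, mem_neighborFinset] at hv
    have hbe : s.bipartiteBelow Γ.G.Adj v =
        ((Γ.G.neighborFinset w ∩ Γ.G.neighborFinset v).erase x).erase y := by
      ext a
      simp [s, mem_bipartiteBelow, adj_comm _ v]
      tauto
    rw [hbe, card_erase_of_mem (by simp [hxy'.symm, hwy, hv.2.2.symm]),
      card_erase_of_mem (by simp [hxw.symm, hv.2.1.symm]),
      Γ.card_inter_of_mem_Y' hw (Γ.dist_eq_two_of_adj_of_adj hv.1.symm hxw.symm hv.2.1),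
      Nat.sub_sub]

theorem TwoYHom.b'_zero_lt_two_mul_c_three (hhom : Γ.TwoYHom γ)
    (hD : 3 ≤ Γ.D) (hc' : 3 ≤ Γ.c' 2) : Γ.b' 0 < 2 * Γ.c 3 :=
  Nat.lt_two_mul_of_mul_sub_eq (Γ.two_le_c_two hD (by omega)) hc'
    (hhom.c_two_mul_eq hD) (hhom.b'_zero_sub_two_mul_eq hD)

end DBRG

theorem stmt_14_general {V : Type} [Fintype V] (Γ : DBRG V)
    (γ : ℕ → ℕ) (hhom : Γ.TwoYHom γ) (hc2' : 3 ≤ Γ.c' 2) :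
    Γ.D ≤ 5 := by
  by_contra! hD
  have hcb := Γ.c_le_b (i := 3) (by omega)
  have hk := Γ.c_add_b_of_odd (i := 3) (by decide) (by omega)
  have := hhom.b'_zero_lt_two_mul_c_three (by omega) hc2'
  omega

theorem stmt_14 {V : Type} [Fintype V] (Γ : DBRG V) (hD : 3 ≤ Γ.D)
    (γ : ℕ → ℕ) (hhom : Γ.TwoYHom γ) (hc2' : 3 ≤ Γ.c' 2) :
    Γ.D ≤ 5 :=
  stmt_14_general Γ γ hhom hc2'
end

section
/- Let $\Gamma$ be a $(Y,Y')$-distance-biregular graph with $k' \ge 3$, $D \ge 3$. For $x \in Y$, $y \in \Gamma_2(x)$, $w \in \Gamma_1(x)\cap\Gamma_1(y)$, and even $i$ with $2 \le i \le \min\{D-1,D'-1\}$, $|\Gamma_i(x)\cap\Gamma_i(y)\cap\Gamma_{i-1}(w)| = \frac{c_i k_i (b_{i-1}-1)}{b_0 b_1}$, where $k_i = |\Gamma_i(x)|$ and $b_j, c_j$ are the intersection numbers of the color class $Y$. -/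
open SimpleGraph Set

/-!
Double counting the edges between consecutive layers `Γ_{n+m}(x) ∩ Γ_m(u)`, where `u` lies at
distance `n` from `x`, expresses `|Γ_i(x) ∩ Γ_{i-1}(w)|`, `|Γ_i(x) ∩ Γ_{i-2}(y)|` and `k_i` as
quotients of products of intersection numbers; counting the geodesics from `x` to a vertex of `Y'`
from both ends gives `c_1 ⋯ c_{i-1} = c'_1 ⋯ c'_{i-1}` for odd `i - 1`. Bipartiteness splits
`Γ_i(x) ∩ Γ_{i-1}(w)` into `Γ_i(x) ∩ Γ_{i-2}(y)` and the set to be counted, and the valency identity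
`k' = b_{i-1} + c_{i-1} = b_1 + 1` turns the difference of the two quotients into the formula.
-/

theorem Set.ncard_mul_eq_ncard_mul {α β : Type*} [Finite α] [Finite β] (r : α → β → Prop)
    {s : Set α} {t : Set β} {m n : ℕ}
    (hm : ∀ a ∈ s, {b | b ∈ t ∧ r a b}.ncard = m) (hn : ∀ b ∈ t, {a | a ∈ s ∧ r a b}.ncard = n) :
    s.ncard * m = t.ncard * n := by
  classical
  have := Fintype.ofFinite α
  have := Fintype.ofFinite β
  simp only [Set.ncard_eq_toFinset_card'] at *
  refine Finset.card_mul_eq_card_mul r (fun a ha => ?_) (fun b hb => ?_)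
  · rw [← hm a (by simpa using ha)]; congr 1; ext; simp [Finset.bipartiteAbove]
  · rw [← hn b (by simpa using hb)]; congr 1; ext; simp [Finset.bipartiteBelow]

theorem Nat.mul_prod_range_eq_of_forall_lt {f c b : ℕ → ℕ} {s : ℕ}
    (h : ∀ m < s, f (m + 1) * c (m + 1) = f m * b m) :
    f s * ∏ t ∈ Finset.range s, c (t + 1) = f 0 * ∏ t ∈ Finset.range s, b t := by
  induction s with
  | zero => simp
  | succ s ih =>
    rw [Finset.prod_range_succ, Finset.prod_range_succ, ← mul_assoc (f 0),
      ← ih fun m hm => h m (by omega)]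
    calc f (s + 1) * ((∏ t ∈ Finset.range s, c (t + 1)) * c (s + 1))
        = f (s + 1) * c (s + 1) * ∏ t ∈ Finset.range s, c (t + 1) := by ring
      _ = _ := by rw [h s (by omega)]; ring

namespace SimpleGraph

variable {V : Type*} {G : SimpleGraph V}

theorem Connected.exists_adj_dist_eq (hG : G.Connected) {x z : V} {t : ℕ}
    (h : G.dist x z = t + 1) : ∃ v, G.Adj z v ∧ G.dist x v = t := by
  obtain ⟨p, hp⟩ := hG.exists_walk_length_eq_dist z x
  cases p with
  | nil => simp at h
  | cons hadj q =>
    refine ⟨_, hadj, ?_⟩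
    have hq := dist_le q
    have := hadj.diff_dist_adj (u := x)
    rw [Walk.length_cons, dist_comm] at hp
    rw [dist_comm] at hq
    omega

theorem Connected.exists_dist_eq_of_le (hG : G.Connected) {x z : V} {t : ℕ}
    (ht : t ≤ G.dist x z) : ∃ v, G.dist x v = t := by
  induction h : G.dist x z generalizing z with
  | zero => exact ⟨z, by omega⟩
  | succ n ih =>
    obtain ⟨v, -, hv⟩ := hG.exists_adj_dist_eq h
    rcases Nat.lt_or_ge t (n + 1) with hlt | hge
    · exact ih (by omega) hv
    · exact ⟨z, by omega⟩

structure IsDistanceRegularizedWith (G : SimpleGraph V) (x : V) (c b : ℕ → ℕ) : Prop where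
  ncard_down : ∀ i z, G.dist x z = i + 1 → {v | G.Adj z v ∧ G.dist x v = i}.ncard = c (i + 1)
  ncard_up : ∀ i z, G.dist x z = i → {v | G.Adj z v ∧ G.dist x v = i + 1}.ncard = b i

namespace IsDistanceRegularizedWith

variable {x : V} {c b : ℕ → ℕ}

theorem c_one (h : G.IsDistanceRegularizedWith x c b) {w : V} (hw : G.Adj x w) : c 1 = 1 := by
  rw [← h.ncard_down 0 w (dist_eq_one_iff_adj.mpr hw), ← Set.ncard_singleton x]
  congr 1
  ext v
  simp only [Set.mem_ofPred_eq, Set.mem_singleton_iff]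
  constructor
  · rintro ⟨hwv, h0⟩
    exact ((hw.reachable.trans hwv.reachable).dist_eq_zero_iff.mp h0).symm
  · rintro rfl
    exact ⟨hw.symm, dist_self⟩

variable [Finite V]

theorem b_pos (hG : G.Connected) (h : G.IsDistanceRegularizedWith x c b) {z : V} {t : ℕ}
    (hz : G.dist x z = t + 1) : 0 < b t := by
  obtain ⟨v, hv, hxv⟩ := hG.exists_adj_dist_eq hz
  rw [← h.ncard_up t v hxv]
  exact (Set.ncard_pos (Set.toFinite _)).mpr ⟨z, hv.symm, hz⟩

theorem prod_c_pos (hG : G.Connected) (h : G.IsDistanceRegularizedWith x c b) {z : V} {s : ℕ}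
    (hs : s ≤ G.dist x z) : 0 < ∏ t ∈ Finset.range s, c (t + 1) := by
  refine Finset.prod_pos fun t ht => ?_
  obtain ⟨v, hxv⟩ := hG.exists_dist_eq_of_le (x := x) (z := z) (t := t + 1) (by simp at ht; omega)
  obtain ⟨w, hw, hxw⟩ := hG.exists_adj_dist_eq hxv
  rw [← h.ncard_down t v hxv]
  exact (Set.ncard_pos (Set.toFinite _)).mpr ⟨w, hw, hxw⟩

end IsDistanceRegularizedWith

section Layers

variable [Finite V] {x u : V} {c b c' b' : ℕ → ℕ}

theorem ncard_setOf_dist_succ_mul (hG : G.Connected) (hx : G.IsDistanceRegularizedWith x c b)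
    (hu : G.IsDistanceRegularizedWith u c' b') {n : ℕ} (hn : G.dist x u = n) (m : ℕ) :
    {v | G.dist x v = m + 1 + n ∧ G.dist u v = m + 1}.ncard * c' (m + 1) =
      {v | G.dist x v = m + n ∧ G.dist u v = m}.ncard * b (m + n) := by
  apply Set.ncard_mul_eq_ncard_mul G.Adj
  · rintro a ⟨hxa, hua⟩
    rw [← hu.ncard_down m a hua]
    congr 1; ext v
    simp only [Set.mem_ofPred_eq]
    have := hG.dist_triangle (u := x) (v := u) (w := v)
    constructor
    · rintro ⟨⟨-, huv⟩, hav⟩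
      exact ⟨hav, huv⟩
    · rintro ⟨hav, huv⟩
      have := hav.diff_dist_adj (u := x)
      exact ⟨⟨by omega, huv⟩, hav⟩
  · rintro a ⟨hxa, hua⟩
    rw [← hx.ncard_up (m + n) a hxa]
    congr 1; ext v
    simp only [Set.mem_ofPred_eq]
    have := hG.dist_triangle (u := x) (v := u) (w := v)
    constructor
    · rintro ⟨⟨hxv, -⟩, hva⟩
      exact ⟨hva.symm, by omega⟩
    · rintro ⟨hav, hxv⟩
      have := hav.diff_dist_adj (u := u)
      exact ⟨⟨by omega, by omega⟩, hav.symm⟩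

theorem ncard_setOf_dist_mul_prod (hG : G.Connected) (hx : G.IsDistanceRegularizedWith x c b)
    (hu : G.IsDistanceRegularizedWith u c' b') {n : ℕ} (hn : G.dist x u = n) (m : ℕ) :
    {v | G.dist x v = m + n ∧ G.dist u v = m}.ncard * ∏ t ∈ Finset.range m, c' (t + 1) =
      ∏ t ∈ Finset.range m, b (t + n) := by
  have hbase : {v | G.dist x v = 0 + n ∧ G.dist u v = 0} = {u} := by
    ext v
    simp only [Set.mem_ofPred_eq, zero_add, Set.mem_singleton_iff, hG.dist_eq_zero_iff]
    constructor
    · rintro ⟨-, rfl⟩; rfl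
    · rintro rfl; exact ⟨hn, rfl⟩
  have := Nat.mul_prod_range_eq_of_forall_lt (s := m)
    (f := fun m => {v | G.dist x v = m + n ∧ G.dist u v = m}.ncard)
    fun m _ => ncard_setOf_dist_succ_mul hG hx hu hn m
  rwa [hbase, Set.ncard_singleton, one_mul] at this

theorem ncard_setOf_dist_succ_mul_of_dist_eq (hG : G.Connected)
    (hx : G.IsDistanceRegularizedWith x c b) (hu : G.IsDistanceRegularizedWith u c' b')
    {m e : ℕ} (h : G.dist x u = m + 1 + e) :
    {v | G.dist x v = m + 1 ∧ G.dist u v = e}.ncard * c (m + 1) =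
      {v | G.dist x v = m ∧ G.dist u v = e + 1}.ncard * c' (e + 1) := by
  apply Set.ncard_mul_eq_ncard_mul G.Adj
  · rintro a ⟨hxa, hua⟩
    rw [← hx.ncard_down m a hxa]
    congr 1; ext v
    simp only [Set.mem_ofPred_eq]
    have := hG.dist_triangle (u := x) (v := v) (w := u)
    rw [dist_comm (u := v)] at this
    constructor
    · rintro ⟨⟨hxv, -⟩, hav⟩
      exact ⟨hav, hxv⟩
    · rintro ⟨hav, hxv⟩
      have := hav.diff_dist_adj (u := u)
      exact ⟨⟨hxv, by omega⟩, hav⟩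
  · rintro a ⟨hxa, hua⟩
    rw [← hu.ncard_down e a hua]
    congr 1; ext v
    simp only [Set.mem_ofPred_eq]
    have := hG.dist_triangle (u := x) (v := v) (w := u)
    rw [dist_comm (u := v)] at this
    constructor
    · rintro ⟨⟨-, huv⟩, hva⟩
      exact ⟨hva.symm, huv⟩
    · rintro ⟨hav, huv⟩
      have := hav.diff_dist_adj (u := x)
      exact ⟨⟨by omega, huv⟩, hav.symm⟩

/-- Both sides count the geodesics from `x` to `u`. -/
theorem prod_c_eq_prod_c_of_dist_eq (hG : G.Connected) (hx : G.IsDistanceRegularizedWith x c b)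
    (hu : G.IsDistanceRegularizedWith u c' b') {s : ℕ} (h : G.dist x u = s) :
    ∏ t ∈ Finset.range s, c (t + 1) = ∏ t ∈ Finset.range s, c' (t + 1) := by
  have hstep (m : ℕ) (hm : m < s) :
      {v | G.dist x v = m + 1 ∧ G.dist u v = s - (m + 1)}.ncard * c (m + 1) =
        {v | G.dist x v = m ∧ G.dist u v = s - m}.ncard * c' (s - m) := by
    have := ncard_setOf_dist_succ_mul_of_dist_eq hG hx hu (m := m) (e := s - (m + 1)) (by omega)
    rwa [show s - (m + 1) + 1 = s - m by omega] at this
  have hx_end : {v | G.dist x v = 0 ∧ G.dist u v = s - 0} = {x} := by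
    ext v
    simp only [Set.mem_ofPred_eq, Set.mem_singleton_iff, hG.dist_eq_zero_iff]
    constructor
    · rintro ⟨rfl, -⟩; rfl
    · rintro rfl; exact ⟨rfl, by rw [dist_comm, h, Nat.sub_zero]⟩
  have hu_end : {v | G.dist x v = s ∧ G.dist u v = s - s} = {u} := by
    ext v
    simp only [Set.mem_ofPred_eq, Set.mem_singleton_iff, Nat.sub_self, hG.dist_eq_zero_iff]
    constructor
    · rintro ⟨-, rfl⟩; rfl
    · rintro rfl; exact ⟨h, rfl⟩
  have := Nat.mul_prod_range_eq_of_forall_lt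
    (f := fun m => {v | G.dist x v = m ∧ G.dist u v = s - m}.ncard) hstep
  rw [hx_end, hu_end, Set.ncard_singleton, Set.ncard_singleton, one_mul, one_mul] at this
  rw [this, ← Finset.prod_range_reflect]
  exact Finset.prod_congr rfl fun t ht => by
    rw [Finset.mem_range] at ht
    congr 1
    omega

end Layers

end SimpleGraph

namespace DBRG

variable {V : Type} [Fintype V] (Γ : DBRG V)

theorem isDistanceRegularizedWith_of_mem_Y {x : V} (hx : x ∈ Γ.Y) :
    Γ.G.IsDistanceRegularizedWith x Γ.c Γ.b where
  ncard_down i z hz := by simpa using Γ.hc (i + 1) (by omega) x hx z hz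
  ncard_up i z hz := Γ.hb i x hx z hz

theorem isDistanceRegularizedWith_of_mem_Y' {x : V} (hx : x ∈ Γ.Y') :
    Γ.G.IsDistanceRegularizedWith x Γ.c' Γ.b' where
  ncard_down i z hz := by simpa using Γ.hc' (i + 1) (by omega) x hx z hz
  ncard_up i z hz := Γ.hb' i x hx z hz

theorem mem_Y'_iff (v : V) : v ∈ Γ.Y' ↔ v ∉ Γ.Y :=
  ⟨fun hv hvY => Γ.disj v ⟨hvY, hv⟩, (Γ.cover v).resolve_left⟩

theorem mem_Y_iff_iff_even_dist (u v : V) : (u ∈ Γ.Y ↔ v ∈ Γ.Y) ↔ Even (Γ.G.dist u v) := by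
  have hwalk {u v : V} (p : Γ.G.Walk u v) : (u ∈ Γ.Y ↔ v ∈ Γ.Y) ↔ Even p.length := by
    induction p with
    | nil => simp
    | cons h q ih =>
      have := Γ.bip _ _ h
      rw [Γ.mem_Y'_iff] at this
      rw [Walk.length_cons, Nat.even_add_one, ← ih]
      tauto
  obtain ⟨p, hp⟩ := Γ.conn.exists_walk_length_eq_dist u v
  rw [← hp, hwalk p]

theorem dist_eq_add_one_or_of_adj {u v : V} (h : Γ.G.Adj u v) (z : V) :
    Γ.G.dist z v = Γ.G.dist z u + 1 ∨ Γ.G.dist z u = Γ.G.dist z v + 1 := by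
  have hparity : Even (Γ.G.dist z u) ↔ ¬ Even (Γ.G.dist z v) := by
    have := Γ.bip u v h
    rw [Γ.mem_Y'_iff] at this
    rw [← Γ.mem_Y_iff_iff_even_dist, ← Γ.mem_Y_iff_iff_even_dist]
    tauto
  have := h.diff_dist_adj (u := z)
  simp only [Nat.even_iff] at hparity
  omega

theorem c_add_b_eq_b'_zero {x z : V} (hx : x ∈ Γ.Y) (hz : z ∈ Γ.Y') :
    Γ.c (Γ.G.dist x z) + Γ.b (Γ.G.dist x z) = Γ.b' 0 := by
  obtain ⟨j, hj⟩ : ∃ j, Γ.G.dist x z = j + 1 :=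
    Nat.exists_eq_add_one.mpr (Γ.conn.pos_dist_of_ne fun hxz => Γ.disj x ⟨hx, hxz ▸ hz⟩)
  have hxR := Γ.isDistanceRegularizedWith_of_mem_Y hx
  have hsplit : {v | Γ.G.Adj z v ∧ Γ.G.dist z v = 0 + 1} =
      {v | Γ.G.Adj z v ∧ Γ.G.dist x v = j} ∪ {v | Γ.G.Adj z v ∧ Γ.G.dist x v = j + 1 + 1} := by
    ext v
    simp only [Set.mem_ofPred_eq, Set.mem_union, zero_add, dist_eq_one_iff_adj, and_self]
    constructor
    · intro hzv
      rcases Γ.dist_eq_add_one_or_of_adj hzv x with h | h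
      · exact .inr ⟨hzv, by omega⟩
      · exact .inl ⟨hzv, by omega⟩
    · rintro (⟨hzv, -⟩ | ⟨hzv, -⟩) <;> exact hzv
  rw [hj, ← Γ.hb' 0 z hz z dist_self, hsplit, ← hxR.ncard_down j z hj, ← hxR.ncard_up (j + 1) z hj]
  refine (Set.ncard_union_eq ?_ (Set.toFinite _) (Set.toFinite _)).symm
  rw [Set.disjoint_left]
  rintro v ⟨-, h₁⟩ ⟨-, h₂⟩
  omega

theorem exists_mem_Y'_dist_eq {x : V} (hx : x ∈ Γ.Y) {s : ℕ} (hodd : Odd s) (hs : s ≤ Γ.D) :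
    ∃ z ∈ Γ.Y', Γ.G.dist x z = s := by
  obtain ⟨⟨xD, hxD⟩, -⟩ := Γ.eccY x hx
  obtain ⟨z, hz⟩ := Γ.conn.exists_dist_eq_of_le (z := xD) (t := s) (hxD ▸ hs)
  refine ⟨z, (Γ.mem_Y'_iff z).mpr fun hzY => ?_, hz⟩
  exact Nat.not_even_iff_odd.mpr hodd (hz ▸ (Γ.mem_Y_iff_iff_even_dist x z).mp (iff_of_true hx hzY))

theorem prod_c_eq_prod_c' {x : V} (hx : x ∈ Γ.Y) {s : ℕ} (hodd : Odd s) (hs : s ≤ Γ.D) :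
    ∏ t ∈ Finset.range s, Γ.c (t + 1) = ∏ t ∈ Finset.range s, Γ.c' (t + 1) := by
  obtain ⟨z, hzY', hz⟩ := Γ.exists_mem_Y'_dist_eq hx hodd hs
  exact prod_c_eq_prod_c_of_dist_eq Γ.conn (Γ.isDistanceRegularizedWith_of_mem_Y hx)
    (Γ.isDistanceRegularizedWith_of_mem_Y' hzY') hz

theorem c_add_b_eq_b_one_add_one {x : V} (hx : x ∈ Γ.Y) {s : ℕ} (hodd : Odd s) (hs : s ≤ Γ.D) :
    Γ.c s + Γ.b s = Γ.b 1 + 1 := by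
  obtain ⟨z, hzY', hz⟩ := Γ.exists_mem_Y'_dist_eq hx hodd hs
  obtain ⟨w, hw⟩ := Γ.conn.exists_dist_eq_of_le (x := x) (z := z) (t := 1) (hz ▸ hodd.pos)
  have hxw : Γ.G.Adj x w := dist_eq_one_iff_adj.mp hw
  have hwY' : w ∈ Γ.Y' := (Γ.bip x w hxw).mp hx
  have := (Γ.c_add_b_eq_b'_zero hx hzY').trans (Γ.c_add_b_eq_b'_zero hx hwY').symm
  rwa [hz, hw, (Γ.isDistanceRegularizedWith_of_mem_Y hx).c_one hxw, add_comm 1] at this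

theorem ncard_setOf_dist_eq_add {x y w : V} (hxw : Γ.G.Adj x w) (hyw : Γ.G.Adj y w) (n : ℕ) :
    {v | Γ.G.dist x v = n + 2 ∧ Γ.G.dist w v = n + 1}.ncard =
      {v | Γ.G.dist x v = n + 2 ∧ Γ.G.dist y v = n}.ncard +
        {v | Γ.G.dist x v = n + 2 ∧ Γ.G.dist y v = n + 2 ∧ Γ.G.dist w v = n + 1}.ncard := by
  have hsplit : {v | Γ.G.dist x v = n + 2 ∧ Γ.G.dist w v = n + 1} =
      {v | Γ.G.dist x v = n + 2 ∧ Γ.G.dist y v = n} ∪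
        {v | Γ.G.dist x v = n + 2 ∧ Γ.G.dist y v = n + 2 ∧ Γ.G.dist w v = n + 1} := by
    ext v
    simp only [Set.mem_ofPred_eq, Set.mem_union]
    have hx := Γ.dist_eq_add_one_or_of_adj hxw v
    have hy := Γ.dist_eq_add_one_or_of_adj hyw v
    simp only [dist_comm (u := v)] at hx hy
    omega
  rw [hsplit]
  refine Set.ncard_union_eq ?_ (Set.toFinite _) (Set.toFinite _)
  rw [Set.disjoint_left]
  rintro v ⟨-, h₁⟩ ⟨-, h₂, -⟩
  omega

end DBRG

theorem stmt_18_general {V : Type} [Fintype V] (Γ : DBRG V)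
    (i : ℕ) (hev : Even i) (hi1 : 2 ≤ i) (hi2 : i ≤ min (Γ.D - 1) (Γ.D' - 1))
    (x : V) (hx : x ∈ Γ.Y) (y : V) (hy : Γ.G.dist x y = 2)
    (w : V) (hw1 : Γ.G.Adj x w) (hw2 : Γ.G.Adj y w) :
    ({u | Γ.G.dist x u = i ∧ Γ.G.dist y u = i ∧ Γ.G.dist w u = i - 1}.ncard : ℚ) =
      (Γ.c i : ℚ) * ({u | Γ.G.dist x u = i}.ncard : ℚ) * ((Γ.b (i - 1) : ℚ) - 1) /
        ((Γ.b 0 : ℚ) * (Γ.b 1 : ℚ)) := by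
  obtain ⟨j, rfl⟩ : ∃ j, i = j + 2 := ⟨i - 2, by omega⟩
  simp only [show j + 2 - 1 = j + 1 from rfl]
  have hodd : Odd (j + 1) := Nat.not_even_iff_odd.mp (Nat.even_add_one.mp hev)
  have hxw : Γ.G.dist x w = 1 := dist_eq_one_iff_adj.mpr hw1
  have hyY : y ∈ Γ.Y := ((Γ.mem_Y_iff_iff_even_dist x y).mpr (hy ▸ even_two)).mp hx
  have hxR := Γ.isDistanceRegularizedWith_of_mem_Y hx
  have hcount_w := ncard_setOf_dist_mul_prod Γ.conn hxR
    (Γ.isDistanceRegularizedWith_of_mem_Y' ((Γ.bip x w hw1).mp hx)) hxw (j + 1)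
  have hcount_y :=
    ncard_setOf_dist_mul_prod Γ.conn hxR (Γ.isDistanceRegularizedWith_of_mem_Y hyY) hy j
  have hcount_x := ncard_setOf_dist_mul_prod Γ.conn hxR hxR dist_self (j + 2)
  rw [← Γ.prod_c_eq_prod_c' hx hodd (by omega)] at hcount_w
  have hdeg := Γ.c_add_b_eq_b_one_add_one hx hodd (by omega)
  have hsplit := Γ.ncard_setOf_dist_eq_add hw1 hw2 j
  obtain ⟨⟨xD, hxD⟩, -⟩ := Γ.eccY x hx
  have hc := hxR.prod_c_pos Γ.conn (z := xD) (s := j + 1) (by omega)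
  have hb0 := hxR.b_pos Γ.conn hxw
  have hb1 := hxR.b_pos Γ.conn hy
  simp only [add_zero, and_self] at hcount_x
  rw [Finset.prod_range_succ, Finset.prod_range_succ'] at hcount_w
  rw [Finset.prod_range_succ, Finset.prod_range_succ, Finset.prod_range_succ',
    Finset.prod_range_succ'] at hcount_x
  rw [Finset.prod_range_succ] at hc
  simp only [add_assoc, Nat.reduceAdd] at hcount_w hcount_x
  set P := ∏ t ∈ Finset.range j, Γ.c (t + 1)
  set Q := ∏ t ∈ Finset.range j, Γ.b (t + 2)
  apply_fun (Nat.cast : ℕ → ℚ) at hcount_w hcount_y hcount_x hdeg hsplit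
  push_cast at hcount_w hcount_y hcount_x hdeg hsplit
  qify at hc hb0 hb1
  rw [eq_div_iff (by positivity)]
  refine mul_right_cancel₀ hc.ne' ?_
  linear_combination (Γ.b 0 * Γ.b 1 : ℚ) * hcount_w - (Γ.b 0 * Γ.b 1 * Γ.c (j + 1) : ℚ) * hcount_y
    - (Γ.b (j + 1) - 1 : ℚ) * hcount_x - (Γ.b 0 * Γ.b 1 * Q : ℚ) * hdeg
    - (Γ.b 0 * Γ.b 1 * P * Γ.c (j + 1) : ℚ) * hsplit

theorem stmt_18 {V : Type} [Fintype V] (Γ : DBRG V) (hk' : 3 ≤ Γ.b' 0) (hD : 3 ≤ Γ.D)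
    (i : ℕ) (hev : Even i) (hi1 : 2 ≤ i) (hi2 : i ≤ min (Γ.D - 1) (Γ.D' - 1))
    (x : V) (hx : x ∈ Γ.Y) (y : V) (hy : Γ.G.dist x y = 2)
    (w : V) (hw1 : Γ.G.Adj x w) (hw2 : Γ.G.Adj y w) :
    ({u | Γ.G.dist x u = i ∧ Γ.G.dist y u = i ∧ Γ.G.dist w u = i - 1}.ncard : ℚ) =
      (Γ.c i : ℚ) * ({u | Γ.G.dist x u = i}.ncard : ℚ) * ((Γ.b (i - 1) : ℚ) - 1) /
        ((Γ.b 0 : ℚ) * (Γ.b 1 : ℚ)) :=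
  stmt_18_general Γ i hev hi1 hi2 x hx y hy w hw1 hw2
end
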